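/- arXiv:0909.0811 — 3 statements merged into one kernel-verified Lean document; each statement's English description precedes it below -/
import Mathlib

section
/- For every a ∈ F_q^*, Σ_{w ∈ SO^-(2,q)} λ(a·Tr(w)) = −K(λ; a²), where Tr denotes the matrix trace. -/
open Matrix
open scoped BigOperators Classical

noncomputable section

abbrev Fq (r : ℕ) : Type := GaloisField 3 r
noncomputable instance (r : ℕ) : Fintype (Fq r) := Fintype.ofFinite _

def lam (r : ℕ) (x : Fq r) : ℂ :=
  Complex.exp (2 * Real.pi * Complex.I * ((Algebra.trace (ZMod 3) (Fq r) x).val : ℂ) / 3)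

def Kl (r : ℕ) (a : Fq r) : ℂ :=
  ∑ α ∈ Finset.univ.filter (fun α : Fq r => α ≠ 0), lam r (α + a * α⁻¹)

def SOminus2 (r : ℕ) (ε : Fq r) : Finset (Matrix (Fin 2) (Fin 2) (Fq r)) :=
  Finset.univ.filter (fun w => ∃ a b : Fq r, a ^ 2 - ε * b ^ 2 = 1 ∧ w = !![a, b * ε; b, a])

/-!
Write `w ∈ SO⁻(2,q)` as `(x, y)` with `x² - εy² = 1`, so that `Tr w = 2x`, and split the Kloosterman
sum according to `t = α + a²/α`. With `χ` the quadratic character, for fixed `x` there are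
`1 - χ(x² - 1)` values of `y` (as `ε` is a nonsquare), and completing the square gives
`1 + χ(t² - 4a²)` values of `α` over `t`; at `t = 2ax` this is `1 + χ(x² - 1)`. The two fibres thus
have two points together, and adding the two sides leaves `2 Σₜ λ(t) = 0`.
-/

open Finset

section OddCharacteristic

variable {F : Type*} [Field F] [Fintype F] [DecidableEq F]

theorem card_sub_mul_sq_eq_one (hF : ringChar F ≠ 2) {ε : F} (hε : ¬IsSquare ε) (x : F) :
    (#{y | x ^ 2 - ε * y ^ 2 = 1} : ℤ) = 1 - quadraticChar F (x ^ 2 - 1) := by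
  have hε0 : ε ≠ 0 := by rintro rfl; exact hε IsSquare.zero
  have hfilter : ({y | x ^ 2 - ε * y ^ 2 = 1} : Finset F) =
      {y : F | y ^ 2 = (x ^ 2 - 1) * ε⁻¹}.toFinset := by
    ext y
    simp only [mem_filter, mem_univ, true_and, Set.mem_toFinset, Set.mem_ofPred_eq,
      eq_mul_inv_iff_mul_eq₀ hε0]
    constructor <;> intro h <;> linear_combination -h
  rw [hfilter, quadraticChar_card_sqrts hF, map_mul,
    quadraticChar_neg_one_iff_not_isSquare.mpr (isSquare_inv.not.mpr hε)]
  ring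

theorem card_add_mul_inv_eq (hF : ringChar F ≠ 2) {b : F} (hb : b ≠ 0) (t : F) :
    (#{α | α ≠ 0 ∧ α + b * α⁻¹ = t} : ℤ) = quadraticChar F (t ^ 2 - 4 * b) + 1 := by
  rw [← quadraticChar_card_sqrts hF]
  congr 1
  have h2 : (2 : F) ≠ 0 := Ring.two_ne_zero hF
  -- completing the square: `α ^ 2 - t * α + b = 0` iff `(2 * α - t) ^ 2 = t ^ 2 - 4 * b`
  apply card_nbij' (fun α => 2 * α - t) (fun s => (s + t) / 2)
  · intro α hα
    simp only [coe_filter, mem_univ, true_and, Set.mem_ofPred_eq, Set.coe_toFinset] at hα ⊢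
    obtain ⟨hα0, hαt⟩ := hα
    field_simp at hαt
    linear_combination 4 * hαt
  · intro s hs
    simp only [coe_filter, mem_univ, true_and, Set.mem_ofPred_eq, Set.coe_toFinset] at hs ⊢
    have hst : s + t ≠ 0 := by
      rintro hst
      rw [eq_neg_of_add_eq_zero_left hst] at hs
      exact hb (mul_left_cancel₀ (mul_ne_zero h2 h2) (by linear_combination hs))
    refine ⟨div_ne_zero hst h2, ?_⟩
    field_simp
    linear_combination hs
  · intro α _
    field_simp
    ring
  · intro s _
    field_simp
    ring

theorem card_sub_mul_sq_eq_one_add_card_add_sq_mul_inv_eq_two (hF : ringChar F ≠ 2) {ε : F}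
    (hε : ¬IsSquare ε) {a : F} (ha : a ≠ 0) (x : F) :
    #{y | x ^ 2 - ε * y ^ 2 = 1} + #{α | α ≠ 0 ∧ α + a ^ 2 * α⁻¹ = 2 * a * x} = 2 := by
  have h2a : 2 * a ≠ 0 := mul_ne_zero (Ring.two_ne_zero hF) ha
  have hχ : quadraticChar F ((2 * a * x) ^ 2 - 4 * a ^ 2) = quadraticChar F (x ^ 2 - 1) := by
    rw [show (2 * a * x) ^ 2 - 4 * a ^ 2 = (2 * a) ^ 2 * (x ^ 2 - 1) by ring, map_mul,
      quadraticChar_sq_one' h2a, one_mul]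
  zify
  rw [card_sub_mul_sq_eq_one hF hε, card_add_mul_inv_eq hF (pow_ne_zero 2 ha), hχ]
  ring

theorem sum_addChar_norm_eq_one_eq_neg_kloosterman {R : Type*} [CommRing R] [IsDomain R]
    {ψ : AddChar F R} (hψ : ψ ≠ 1) (hF : ringChar F ≠ 2) {ε : F} (hε : ¬IsSquare ε) {a : F}
    (ha : a ≠ 0) :
    ∑ p : F × F with p.1 ^ 2 - ε * p.2 ^ 2 = 1, ψ (2 * a * p.1) =
      -∑ α : F with α ≠ 0, ψ (α + a ^ 2 * α⁻¹) := by
  have h2a : 2 * a ≠ 0 := mul_ne_zero (Ring.two_ne_zero hF) ha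
  have hquadric : ∑ p : F × F with p.1 ^ 2 - ε * p.2 ^ 2 = 1, ψ (2 * a * p.1) =
      ∑ x, #{y | x ^ 2 - ε * y ^ 2 = 1} • ψ (2 * a * x) := by
    rw [sum_filter, Fintype.sum_prod_type]
    refine sum_congr rfl fun x _ => ?_
    rw [← sum_filter]
    exact sum_const (ψ (2 * a * x))
  have hkloosterman : ∑ α : F with α ≠ 0, ψ (α + a ^ 2 * α⁻¹) =
      ∑ x, #{α | α ≠ 0 ∧ α + a ^ 2 * α⁻¹ = 2 * a * x} • ψ (2 * a * x) := by
    rw [← sum_fiberwise_of_maps_to' (g := fun α => α + a ^ 2 * α⁻¹) (f := ψ)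
      (fun _ _ => mem_univ _), ← Equiv.sum_comp (Equiv.mulLeft₀ _ h2a)]
    simp only [sum_const, filter_filter]
    rfl
  have hψsum : ∑ x, ψ (2 * a * x) = 0 :=
    (Equiv.sum_comp (Equiv.mulLeft₀ _ h2a) ψ).trans (AddChar.sum_eq_zero_of_ne_one hψ)
  rw [eq_neg_iff_add_eq_zero, hquadric, hkloosterman, ← sum_add_distrib]
  simp only [← add_nsmul, card_sub_mul_sq_eq_one_add_card_add_sq_mul_inv_eq_two hF hε ha,
    ← smul_sum, hψsum, smul_zero]

end OddCharacteristic

def lamChar (r : ℕ) : AddChar (Fq r) ℂ :=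
  ZMod.stdAddChar.compAddMonoidHom (Algebra.trace (ZMod 3) (Fq r)).toAddMonoidHom

theorem lamChar_apply (r : ℕ) (x : Fq r) : lamChar r x = lam r x := by
  simpa [lam, lamChar] using
    ZMod.stdAddChar_coe (N := 3) ((Algebra.trace (ZMod 3) (Fq r) x).val : ℤ)

theorem lamChar_ne_one (r : ℕ) : lamChar r ≠ 1 := by
  obtain ⟨x, hx⟩ := Algebra.trace_surjective (ZMod 3) (Fq r) 1
  refine AddChar.ne_one_iff.mpr ⟨x, ?_⟩
  rw [lamChar, AddChar.compAddMonoidHom_apply, LinearMap.toAddMonoidHom_coe, hx,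
    ← (ZMod.stdAddChar (N := 3)).map_zero_eq_one, ZMod.injective_stdAddChar.ne_iff]
  exact one_ne_zero

theorem ringChar_Fq_ne_two (r : ℕ) : ringChar (Fq r) ≠ 2 := by
  rw [ringChar.eq (Fq r) 3]; decide

theorem sum_SOminus2_trace (r : ℕ) (ε : Fq r) (f : Fq r → ℂ) :
    ∑ w ∈ SOminus2 r ε, f w.trace =
      ∑ p : Fq r × Fq r with p.1 ^ 2 - ε * p.2 ^ 2 = 1, f (2 * p.1) := by
  symm
  apply sum_nbij' (fun p => !![p.1, p.2 * ε; p.2, p.1]) (fun w => (w 0 0, w 1 0))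
  · intro p hp
    simp only [SOminus2, mem_filter, mem_univ, true_and] at hp ⊢
    exact ⟨p.1, p.2, hp, rfl⟩
  · rintro w hw
    simp only [SOminus2, mem_filter, mem_univ, true_and] at hw ⊢
    obtain ⟨x, y, hxy, rfl⟩ := hw
    simpa using hxy
  · intro p _
    simp
  · intro w hw
    simp only [SOminus2, mem_filter, mem_univ, true_and] at hw
    obtain ⟨x, y, hxy, rfl⟩ := hw
    simp
  · intro p _
    simp [trace_fin_two, two_mul]

theorem stmt3_general (r : ℕ) (ε : Fq r) (hε : ¬ IsSquare ε) (a : Fq r) (ha : a ≠ 0) :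
    ∑ w ∈ SOminus2 r ε, lam r (a * w.trace) = -Kl r (a ^ 2) := by
  have h := sum_addChar_norm_eq_one_eq_neg_kloosterman (lamChar_ne_one r)
    (ringChar_Fq_ne_two r) hε ha
  simp only [lamChar_apply] at h
  rw [sum_SOminus2_trace (f := fun t => lam r (a * t)), Kl]
  convert h using 3
  ring

theorem stmt3 (r : ℕ) (hr : 0 < r) (ε : Fq r) (hε : ¬ IsSquare ε)
    (a : Fq r) (ha : a ≠ 0) :
    ∑ w ∈ SOminus2 r ε, lam r (a * w.trace) = -Kl r (a ^ 2) :=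
  stmt3_general r ε hε a ha
end
end

section
/- For every a ∈ F_q^*, Σ_{w ∈ O^-(2,q)} λ(a·Tr(w)) = −K(λ; a²) + q + 1, where Tr denotes the matrix trace. -/
open Matrix
open scoped BigOperators Classical

noncomputable section

def deltaEps (r : ℕ) (ε : Fq r) : Matrix (Fin 2) (Fin 2) (Fq r) := !![1, 0; 0, -ε]

def Ominus2 (r : ℕ) (ε : Fq r) : Finset (Matrix (Fin 2) (Fin 2) (Fq r)) :=
  Finset.univ.filter (fun w => IsUnit w.det ∧ wᵀ * deltaEps r ε * w = deltaEps r ε)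

/-!
The orthogonal group of the anisotropic form `x² - εy²` consists of the rotations
`!![x, εy; y, x]` and the reflections `!![x, -εy; y, -x]`, with `(x, y)` on the conic
`x² - εy² = 1`. Reflections have trace `0` and contribute `#conic = q + 1`; a rotation has
trace `2x`. For every `c`, the number of `α ≠ 0` with `α + a²/α = c` is `1 + χ(c² - 4a²)`,
and the number of conic points with `2ax = c` is `1 + χ((c² - 4a²) / (4a²ε)) = 1 - χ(c² - 4a²)`
since `ε` is a nonsquare. The two fibre counts add up to `2`, so the Kloosterman sum plus the
rotation sum is `2 ∑_c λ(c) = 0`.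
-/

open Finset

theorem sum_comp_add_sum_comp_eq_nsmul_sum {ι κ β M : Type*} [Fintype β] [AddCommMonoid M]
    {s : Finset ι} {t : Finset κ} {f : ι → β} {g : κ → β} {n : ℕ}
    (h : ∀ c, #{i ∈ s | f i = c} + #{j ∈ t | g j = c} = n) (φ : β → M) :
    ∑ i ∈ s, φ (f i) + ∑ j ∈ t, φ (g j) = n • ∑ c, φ c := by
  rw [← sum_fiberwise' s f φ, ← sum_fiberwise' t g φ, ← sum_add_distrib, smul_sum]
  refine sum_congr rfl fun c _ => ?_
  rw [sum_const, sum_const, ← add_smul, h]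

section NormOnePoints

variable {F : Type*} [Field F] [Fintype F]

def normOnePoints (ε : F) : Finset (F × F) := {p | p.1 ^ 2 - ε * p.2 ^ 2 = 1}

@[simp]
theorem mem_normOnePoints {ε : F} {p : F × F} :
    p ∈ normOnePoints ε ↔ p.1 ^ 2 - ε * p.2 ^ 2 = 1 := by
  simp [normOnePoints]

theorem card_filter_add_mul_inv_eq (hF : ringChar F ≠ 2) {b : F} (hb : b ≠ 0) (c : F) :
    (#{α ∈ univ.filter (· ≠ 0) | α + b * α⁻¹ = c} : ℤ) =
      quadraticChar F (c ^ 2 - 4 * b) + 1 := by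
  have h2 : (2 : F) ≠ 0 := Ring.two_ne_zero hF
  rw [← quadraticChar_card_sqrts hF, Set.toFinset_ofPred]
  congr 1
  apply card_nbij' (fun α => 2 * α - c) (fun y => (y + c) / 2)
  · intro α hα
    simp only [coe_filter, mem_filter, mem_univ, true_and, Set.mem_ofPred_eq] at hα ⊢
    obtain ⟨hα0, hαc⟩ := hα
    field_simp at hαc
    linear_combination 4 * hαc
  · intro y hy
    simp only [coe_filter, mem_filter, mem_univ, true_and, Set.mem_ofPred_eq] at hy ⊢
    have hyc : y + c ≠ 0 := by
      intro h0
      rw [eq_neg_of_add_eq_zero_left h0] at hy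
      have h4b : (2 : F) ^ 2 * b = 0 := by linear_combination hy
      simp [h2, hb] at h4b
    refine ⟨div_ne_zero hyc h2, ?_⟩
    field_simp
    linear_combination hy
  · intro α _
    field_simp
    ring
  · intro y _
    field_simp
    ring

theorem card_normOnePoints_filter_fst_eq (hF : ringChar F ≠ 2) {ε : F} (hε : ε ≠ 0) (x : F) :
    (#{p ∈ normOnePoints ε | p.1 = x} : ℤ) = quadraticChar F ((x ^ 2 - 1) / ε) + 1 := by
  rw [← quadraticChar_card_sqrts hF, Set.toFinset_ofPred]
  congr 1
  apply card_nbij' Prod.snd (fun y => (x, y))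
  · rintro ⟨p1, p2⟩ hp
    simp only [coe_filter, mem_univ, true_and, mem_normOnePoints, Set.mem_ofPred_eq] at hp ⊢
    obtain ⟨hp, rfl⟩ := hp
    field_simp
    linear_combination -hp
  · intro y hy
    simp only [coe_filter, mem_univ, true_and, mem_normOnePoints, Set.mem_ofPred_eq] at hy ⊢
    field_simp at hy
    exact ⟨by linear_combination -hy, trivial⟩
  · rintro ⟨p1, p2⟩ hp
    simp only [coe_filter, Set.mem_ofPred_eq] at hp
    simp [hp.2]
  · intro y _
    rfl

theorem card_kloosterman_fiber_add_card_normOnePoints_fiber (hF : ringChar F ≠ 2) {ε : F}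
    (hε : ¬IsSquare ε) {a : F} (ha : a ≠ 0) (c : F) :
    #{α ∈ univ.filter (· ≠ 0) | α + a ^ 2 * α⁻¹ = c} +
      #{p ∈ normOnePoints ε | a * (2 * p.1) = c} = 2 := by
  have h2 : (2 : F) ≠ 0 := Ring.two_ne_zero hF
  have h2a : 2 * a ≠ 0 := mul_ne_zero h2 ha
  have hε0 : ε ≠ 0 := by rintro rfl; exact hε IsSquare.zero
  have hfiber : {p ∈ normOnePoints ε | a * (2 * p.1) = c} =
      {p ∈ normOnePoints ε | p.1 = c / (2 * a)} := by
    refine filter_congr fun p _ => ?_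
    rw [eq_div_iff h2a]
    constructor <;> intro h <;> linear_combination h
  have hχ : quadraticChar F (c ^ 2 - 4 * a ^ 2) =
      -quadraticChar F (((c / (2 * a)) ^ 2 - 1) / ε) := by
    have hsplit : c ^ 2 - 4 * a ^ 2 = ((c / (2 * a)) ^ 2 - 1) / ε * ((2 * a) ^ 2 * ε) := by
      field_simp
      ring
    rw [hsplit, map_mul, map_mul, quadraticChar_sq_one' h2a,
      quadraticChar_neg_one_iff_not_isSquare.mpr hε]
    ring
  have hkloosterman := card_filter_add_mul_inv_eq hF (pow_ne_zero 2 ha) c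
  have hconic := card_normOnePoints_filter_fst_eq hF hε0 (c / (2 * a))
  rw [hχ] at hkloosterman
  rw [hfiber]
  omega

theorem card_normOnePoints (hF : ringChar F ≠ 2) {ε : F} (hε : ¬IsSquare ε) :
    #(normOnePoints ε) = Fintype.card F + 1 := by
  have hcount := sum_comp_add_sum_comp_eq_nsmul_sum
    (card_kloosterman_fiber_add_card_normOnePoints_fiber hF hε one_ne_zero) (fun _ => 1)
  simp only [sum_const, smul_eq_mul, mul_one, card_univ] at hcount
  rw [filter_ne', card_erase_of_mem (mem_univ 0), card_univ] at hcount
  have : 0 < Fintype.card F := Fintype.card_pos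
  omega

theorem sum_kloosterman_add_sum_normOnePoints_eq_zero (hF : ringChar F ≠ 2) {ε : F}
    (hε : ¬IsSquare ε) {a : F} (ha : a ≠ 0) {R : Type*} [CommRing R] [IsDomain R]
    {ψ : AddChar F R} (hψ : ψ ≠ 1) :
    ∑ α ∈ univ.filter (· ≠ 0), ψ (α + a ^ 2 * α⁻¹) +
      ∑ p ∈ normOnePoints ε, ψ (a * (2 * p.1)) = 0 := by
  rw [sum_comp_add_sum_comp_eq_nsmul_sum
    (card_kloosterman_fiber_add_card_normOnePoints_fiber hF hε ha) ψ,
    AddChar.sum_eq_zero_of_ne_one hψ, smul_zero]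

end NormOnePoints

section OrthogonalMatrices

variable {F : Type*} [Field F]

def rotationMatrix (ε : F) (p : F × F) : Matrix (Fin 2) (Fin 2) F :=
  !![p.1, ε * p.2; p.2, p.1]

def reflectionMatrix (ε : F) (p : F × F) : Matrix (Fin 2) (Fin 2) F :=
  !![p.1, -(ε * p.2); p.2, -p.1]

theorem rotationMatrix_injective (ε : F) : Function.Injective (rotationMatrix ε) :=
  fun _ _ h => Prod.ext (congrFun₂ h 0 0) (congrFun₂ h 1 0)

theorem reflectionMatrix_injective (ε : F) : Function.Injective (reflectionMatrix ε) :=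
  fun _ _ h => Prod.ext (congrFun₂ h 0 0) (congrFun₂ h 1 0)

theorem trace_rotationMatrix (ε : F) (p : F × F) : (rotationMatrix ε p).trace = 2 * p.1 := by
  rw [rotationMatrix, trace_fin_two_of, two_mul]

theorem trace_reflectionMatrix (ε : F) (p : F × F) : (reflectionMatrix ε p).trace = 0 := by
  rw [reflectionMatrix, trace_fin_two_of, add_neg_cancel]

variable [Fintype F] {ε : F}

theorem det_rotationMatrix {p : F × F} (hp : p ∈ normOnePoints ε) :
    (rotationMatrix ε p).det = 1 := by
  rw [mem_normOnePoints] at hp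
  rw [rotationMatrix, det_fin_two_of]
  linear_combination hp

theorem det_reflectionMatrix {p : F × F} (hp : p ∈ normOnePoints ε) :
    (reflectionMatrix ε p).det = -1 := by
  rw [mem_normOnePoints] at hp
  rw [reflectionMatrix, det_fin_two_of]
  linear_combination -hp

theorem transpose_mul_mul_rotationMatrix {p : F × F} (hp : p ∈ normOnePoints ε) :
    (rotationMatrix ε p)ᵀ * !![1, 0; 0, -ε] * rotationMatrix ε p = !![1, 0; 0, -ε] := by
  rw [mem_normOnePoints] at hp
  ext i j
  fin_cases i <;> fin_cases j <;> simp [rotationMatrix, mul_apply, Fin.sum_univ_two]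
  · linear_combination hp
  · ring
  · ring
  · linear_combination -ε * hp

theorem transpose_mul_mul_reflectionMatrix {p : F × F} (hp : p ∈ normOnePoints ε) :
    (reflectionMatrix ε p)ᵀ * !![1, 0; 0, -ε] * reflectionMatrix ε p = !![1, 0; 0, -ε] := by
  rw [mem_normOnePoints] at hp
  ext i j
  fin_cases i <;> fin_cases j <;> simp [reflectionMatrix, mul_apply, Fin.sum_univ_two]
  · linear_combination hp
  · ring
  · ring
  · linear_combination -ε * hp

theorem exists_eq_rotationMatrix_or_reflectionMatrix (hε : ε ≠ 0)
    {w : Matrix (Fin 2) (Fin 2) F} (hw : wᵀ * !![1, 0; 0, -ε] * w = !![1, 0; 0, -ε]) :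
    ∃ p ∈ normOnePoints ε, w = rotationMatrix ε p ∨ w = reflectionMatrix ε p := by
  have hdet : w.det * w.det = 1 := by
    have := congrArg det hw
    rw [det_mul, det_mul, det_transpose, det_fin_two_of] at this
    exact mul_right_cancel₀ (neg_ne_zero.mpr hε) (by linear_combination this)
  have h00 := congrFun₂ hw 0 0
  have h01 := congrFun₂ hw 0 1
  simp only [mul_apply, Fin.sum_univ_two, transpose_apply, of_apply, cons_val', cons_val_zero,
    cons_val_one, empty_val', cons_val_fin_one] at h00 h01
  -- Cramer's rule for the linear system `h01`, `det w = w 0 0 * w 1 1 - w 0 1 * w 1 0` in the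
  -- unknowns `w 0 1`, `w 1 1`, whose determinant is `w 0 0 ^ 2 - ε * w 1 0 ^ 2 = 1` by `h00`.
  have hw01 : w 0 1 = w.det * ε * w 1 0 := by
    rw [det_fin_two]
    linear_combination -w 0 1 * h00 + w 0 0 * h01
  have hw11 : w 1 1 = w.det * w 0 0 := by
    rw [det_fin_two]
    linear_combination -w 1 1 * h00 + w 1 0 * h01
  refine ⟨(w 0 0, w 1 0), mem_normOnePoints.mpr (by linear_combination h00), ?_⟩
  rw [eta_fin_two w, rotationMatrix, reflectionMatrix, hw01, hw11]
  rcases mul_self_eq_one_iff.mp hdet with hd | hd <;> simp [hd]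

theorem sum_image_rotationMatrix_union_image_reflectionMatrix (hF : ringChar F ≠ 2)
    {M : Type*} [AddCommMonoid M] (φ : Matrix (Fin 2) (Fin 2) F → M) :
    ∑ w ∈ (normOnePoints ε).image (rotationMatrix ε) ∪
        (normOnePoints ε).image (reflectionMatrix ε), φ w =
      ∑ p ∈ normOnePoints ε, φ (rotationMatrix ε p) +
        ∑ p ∈ normOnePoints ε, φ (reflectionMatrix ε p) := by
  have hdisj : Disjoint ((normOnePoints ε).image (rotationMatrix ε))
      ((normOnePoints ε).image (reflectionMatrix ε)) := by
    simp only [disjoint_left, mem_image]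
    rintro _ ⟨p, hp, rfl⟩ ⟨p', hp', hpp'⟩
    have hdet := congrArg det hpp'
    rw [det_rotationMatrix hp, det_reflectionMatrix hp'] at hdet
    exact Ring.neg_one_ne_one_of_char_ne_two hF hdet
  rw [sum_union hdisj, sum_image (rotationMatrix_injective ε).injOn,
    sum_image (reflectionMatrix_injective ε).injOn]

end OrthogonalMatrices

theorem coe_lamChar (r : ℕ) : ⇑(lamChar r) = lam r := by
  ext x
  rw [lamChar, AddChar.compAddMonoidHom_apply, ZMod.stdAddChar_apply, ZMod.toCircle_apply, lam]
  push_cast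
  rfl

theorem Ominus2_eq_image_union_image (r : ℕ) {ε : Fq r} (hε : ε ≠ 0) :
    Ominus2 r ε = (normOnePoints ε).image (rotationMatrix ε) ∪
      (normOnePoints ε).image (reflectionMatrix ε) := by
  ext w
  rw [Ominus2, mem_filter, deltaEps]
  simp only [mem_univ, true_and, mem_union, mem_image]
  constructor
  · rintro ⟨-, hw⟩
    obtain ⟨p, hp, rfl | rfl⟩ := exists_eq_rotationMatrix_or_reflectionMatrix hε hw
    exacts [.inl ⟨p, hp, rfl⟩, .inr ⟨p, hp, rfl⟩]
  · rintro (⟨p, hp, rfl⟩ | ⟨p, hp, rfl⟩)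
    · exact ⟨by simp [det_rotationMatrix hp], transpose_mul_mul_rotationMatrix hp⟩
    · exact ⟨by simp [det_reflectionMatrix hp], transpose_mul_mul_reflectionMatrix hp⟩

theorem stmt4 (r : ℕ) (hr : 0 < r) (ε : Fq r) (hε : ¬ IsSquare ε)
    (a : Fq r) (ha : a ≠ 0) :
    ∑ w ∈ Ominus2 r ε, lam r (a * w.trace) = -Kl r (a ^ 2) + (3 : ℂ) ^ r + 1 := by
  have hF : ringChar (Fq r) ≠ 2 := by rw [ringChar.eq (Fq r) 3]; decide
  have hε0 : ε ≠ 0 := by rintro rfl; exact hε IsSquare.zero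
  have hq : Fintype.card (Fq r) = 3 ^ r := by
    rw [← Nat.card_eq_fintype_card, GaloisField.card 3 r hr.ne']
  have hsum := sum_kloosterman_add_sum_normOnePoints_eq_zero hF hε ha (lamChar_ne_one r)
  rw [Ominus2_eq_image_union_image r hε0,
    sum_image_rotationMatrix_union_image_reflectionMatrix hF, Kl]
  simp only [trace_rotationMatrix, trace_reflectionMatrix, mul_zero, ← coe_lamChar,
    AddChar.map_zero_eq_one, sum_const, card_normOnePoints hF hε, hq] at hsum ⊢
  linear_combination hsum
end
end

section
/- For every β ∈ F_q, the number n₁(β) of w ∈ SO^-(2,q) with Tr(w) = β equals 2 − δ(1,q;β); explicitly, n₁(β) = 0 if β² − 1 is a nonzero square in F_q, n₁(β) = 1 if β² − 1 = 0, and n₁(β) = 2 if β² − 1 is a nonsquare in F_q. -/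
open Matrix
open scoped BigOperators Classical

noncomputable section

/-- `n₁(β)`, the number of elements of `SO⁻(2, q)` with trace `β`. -/
def nOne (r : ℕ) (ε : Fq r) (β : Fq r) : ℕ :=
  ((SOminus2 r ε).filter (fun w => w.trace = β)).card

/-- `δ(1, q; β) = #{α ∈ F_q^* : α + α⁻¹ = β}`. -/
def deltaOne (r : ℕ) (β : Fq r) : ℕ :=
  (Finset.univ.filter (fun α : Fq r => α ≠ 0 ∧ α + α⁻¹ = β)).card

open Finset

/-! In characteristic 3 the trace condition `2a = β` pins down `a = -β`, so the elements of
`SO⁻(2, q)` with trace `β` correspond to the `b` with `ε b² = β² - 1`. Since `ε` is a nonsquare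
there are `1 - χ(β² - 1)` of them, `χ` the quadratic character. On the other side `α ↦ 2α - β`
identifies the solutions of `α + α⁻¹ = β` with the square roots of `β² - 4 = β² - 1`, of which
there are `1 + χ(β² - 1)`. -/

section FiniteField

variable {F : Type*} [Field F] [Fintype F] [DecidableEq F]

theorem card_filter_sq_eq (hF : ringChar F ≠ 2) (a : F) :
    (#{x : F | x ^ 2 = a} : ℤ) = quadraticChar F a + 1 := by
  rw [← quadraticChar_card_sqrts hF, Set.toFinset_ofPred]

theorem card_filter_mul_sq_eq_of_not_isSquare (hF : ringChar F ≠ 2) {ε : F} (hε : ¬IsSquare ε)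
    (c : F) : (#{x : F | ε * x ^ 2 = c} : ℤ) = 1 - quadraticChar F c := by
  have hε0 : ε ≠ 0 := by rintro rfl; exact hε IsSquare.zero
  have hεinv : quadraticChar F ε⁻¹ = -1 :=
    quadraticChar_neg_one_iff_not_isSquare.2 (isSquare_inv.not.2 hε)
  have hcard : #{x : F | ε * x ^ 2 = c} = #{x : F | x ^ 2 = ε⁻¹ * c} := by
    rw [filter_congr fun x _ => (eq_inv_mul_iff_mul_eq₀ hε0).symm]
  rw [hcard, card_filter_sq_eq hF, map_mul, hεinv]
  ring

theorem card_filter_add_inv_eq (hF : ringChar F ≠ 2) (β : F) :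
    #{α : F | α ≠ 0 ∧ α + α⁻¹ = β} = #{s : F | s ^ 2 = β ^ 2 - 4} := by
  have h2 : (2 : F) ≠ 0 := Ring.two_ne_zero hF
  refine card_nbij' (fun α => 2 * α - β) (fun s => (β + s) / 2) ?_ ?_ ?_ ?_
  · intro α
    simp only [coe_filter, mem_univ, true_and, Set.mem_ofPred_eq]
    rintro ⟨hα, rfl⟩
    field_simp
    ring
  · intro s
    simp only [coe_filter, mem_univ, true_and, Set.mem_ofPred_eq]
    intro hs
    have hprod : (β + s) / 2 * (β - (β + s) / 2) = 1 := by
      field_simp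
      linear_combination -hs
    refine ⟨left_ne_zero_of_mul_eq_one hprod, ?_⟩
    rw [inv_eq_of_mul_eq_one_right hprod]
    ring
  · intro α _
    field_simp
    ring
  · intro s _
    field_simp
    ring

end FiniteField

theorem three_eq_zero_Fq (r : ℕ) : (3 : Fq r) = 0 := by
  exact_mod_cast CharP.cast_eq_zero (Fq r) 3

theorem nOne_eq_card (r : ℕ) (ε β : Fq r) :
    nOne r ε β = #{b : Fq r | ε * b ^ 2 = β ^ 2 - 1} := by
  have h3 := three_eq_zero_Fq r
  have diag_eq_neg {a : Fq r} (h : a + a = β) : a = -β := by linear_combination -h + a * h3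
  unfold nOne SOminus2
  rw [filter_filter]
  refine card_nbij' (fun w => w 1 0) (fun b => !![-β, b * ε; b, -β]) ?_ ?_ ?_ ?_
  · intro w
    simp only [coe_filter, mem_univ, true_and, Set.mem_ofPred_eq]
    rintro ⟨⟨a, b, hab, rfl⟩, htr⟩
    obtain rfl := diag_eq_neg (by simpa [Matrix.trace_fin_two] using htr)
    simp only [Matrix.of_apply, Matrix.cons_val', Matrix.cons_val_one, Matrix.cons_val_zero,
      Matrix.empty_val', Matrix.cons_val_fin_one]
    linear_combination -hab
  · intro b
    simp only [coe_filter, mem_univ, true_and, Set.mem_ofPred_eq]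
    intro hb
    refine ⟨⟨-β, b, by linear_combination -hb, rfl⟩, ?_⟩
    simp only [Matrix.trace_fin_two, Matrix.of_apply, Matrix.cons_val', Matrix.cons_val_zero,
      Matrix.cons_val_one, Matrix.empty_val', Matrix.cons_val_fin_one]
    linear_combination -β * h3
  · intro w
    simp only [coe_filter, mem_univ, true_and, Set.mem_ofPred_eq]
    rintro ⟨⟨a, b, hab, rfl⟩, htr⟩
    obtain rfl := diag_eq_neg (by simpa [Matrix.trace_fin_two] using htr)
    simp
  · intro b _
    simp

theorem nOne_eq_one_sub_quadraticChar (r : ℕ) {ε : Fq r} (hε : ¬IsSquare ε) (β : Fq r) :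
    (nOne r ε β : ℤ) = 1 - quadraticChar (Fq r) (β ^ 2 - 1) := by
  rw [nOne_eq_card, card_filter_mul_sq_eq_of_not_isSquare (ringChar_Fq_ne_two r) hε]

theorem deltaOne_eq_quadraticChar_add_one (r : ℕ) (β : Fq r) :
    (deltaOne r β : ℤ) = quadraticChar (Fq r) (β ^ 2 - 1) + 1 := by
  have hF := ringChar_Fq_ne_two r
  have h4 : β ^ 2 - 4 = β ^ 2 - 1 := by linear_combination -three_eq_zero_Fq r
  rw [deltaOne, card_filter_add_inv_eq hF, h4, card_filter_sq_eq hF]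

theorem stmt14_general (r : ℕ) (ε : Fq r) (hε : ¬ IsSquare ε) (β : Fq r) :
    (nOne r ε β : ℤ) = 2 - (deltaOne r β : ℤ)
    ∧ (IsSquare (β ^ 2 - 1) ∧ β ^ 2 - 1 ≠ 0 → nOne r ε β = 0)
    ∧ (β ^ 2 - 1 = 0 → nOne r ε β = 1)
    ∧ (¬ IsSquare (β ^ 2 - 1) → nOne r ε β = 2) := by
  have hn := nOne_eq_one_sub_quadraticChar r hε β
  refine ⟨by rw [hn, deltaOne_eq_quadraticChar_add_one]; ring, ?_, ?_, ?_⟩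
  · rintro ⟨hsq, h0⟩
    rw [(quadraticChar_one_iff_isSquare h0).2 hsq] at hn
    omega
  · intro h0
    rw [h0, quadraticChar_zero] at hn
    omega
  · intro hsq
    rw [quadraticChar_neg_one_iff_not_isSquare.2 hsq] at hn
    omega

theorem stmt14 (r : ℕ) (hr : 0 < r) (ε : Fq r) (hε : ¬ IsSquare ε) (β : Fq r) :
    (nOne r ε β : ℤ) = 2 - (deltaOne r β : ℤ)
    ∧ (IsSquare (β ^ 2 - 1) ∧ β ^ 2 - 1 ≠ 0 → nOne r ε β = 0)
    ∧ (β ^ 2 - 1 = 0 → nOne r ε β = 1)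
    ∧ (¬ IsSquare (β ^ 2 - 1) → nOne r ε β = 2) :=
  stmt14_general r ε hε β
end
end
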